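/- arXiv:2204.00464 — 3 statements merged into one kernel-verified Lean document; each statement's English description precedes it below -/
import Mathlib

section
/- For any 0 < a < c < b, any L > 0, and any price P > 0, the v3 bundle value decomposes additively over subintervals: V³(L,a,c,P) + V³(L,c,b,P) = V³(L,a,b,P) (componentwise addition of pairs). -/
/-- The v3 bundle value of L units of [a,b]-liquidity at price P. -/
noncomputable def V3 (L a b P : ℝ) : ℝ × ℝ :=
  if P < a then (L * (1 / Real.sqrt a - 1 / Real.sqrt b), 0)
  else if b < P then (0, L * (Real.sqrt b - Real.sqrt a))
  else (L * (1 / Real.sqrt P - 1 / Real.sqrt b), L * (Real.sqrt P - Real.sqrt a))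

/-- The v3 bundle value decomposes additively over subintervals. -/
theorem v3_bundle_subinterval_additive (L a b c P : ℝ)
    (hL : 0 < L) (ha : 0 < a) (hac : a < c) (hcb : c < b) (hP : 0 < P) :
    V3 L a c P + V3 L c b P = V3 L a b P := by
  unfold V3
  split_ifs <;>
    first
    | (exfalso; linarith)
    | (have hPc : P = c := le_antisymm (by linarith) (by linarith)
       subst hPc
       rw [Prod.mk_add_mk, Prod.mk.injEq]
       constructor <;> ring)
    | (rw [Prod.mk_add_mk, Prod.mk.injEq]
       constructor <;> ring)
end

section
/- Fix 0 < a < b, initial price P > 0 and final price P' > 0. Define the holding value v_h(P,P') = P'·(V³(1,a,b,P))₁ + (V³(1,a,b,P))₂ and the purchase value vₚ(P') = P'·(V³(1,a,b,P'))₁ + (V³(1,a,b,P'))₂. Then v_h(P,P') ≥ vₚ(P'), i.e., the impermanent loss v_h(P,P') − vₚ(P') is nonnegative. -/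
/-!
With `c` the square root of the price clamped to `[√a, √b]`, one unit of `[a,b]`-liquidity is
the bundle `(1/c - 1/√b, c - √a)`. At price `P' = p²` it is worth `p²/c + c - p²/√b - √a`, and
`c ↦ p²/c + c` is minimised over `[√a, √b]` at the clamp of `p`: the bundle the position holds
at price `P'` is the cheapest one, at that price, among all bundles it can hold.
-/

open Set

theorem V3_one_eq_projIcc {a b : ℝ} (hab : a ≤ b) (P : ℝ) :
    V3 1 a b P =
      (1 / projIcc (√a) (√b) (Real.sqrt_le_sqrt hab) (√P) - 1 / √b,
        projIcc (√a) (√b) (Real.sqrt_le_sqrt hab) (√P) - √a) := by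
  have hsqrt := Real.sqrt_le_sqrt hab
  unfold V3
  split_ifs with hPa hbP
  · rw [projIcc_of_le_left hsqrt (Real.sqrt_le_sqrt hPa.le)]
    simp
  · rw [projIcc_of_right_le hsqrt (Real.sqrt_le_sqrt hbP.le)]
    simp
  · rw [projIcc_of_mem hsqrt ⟨Real.sqrt_le_sqrt (not_lt.1 hPa), Real.sqrt_le_sqrt (not_lt.1 hbP)⟩]
    simp

theorem sq_div_add_projIcc_le {lo hi p c : ℝ} (hlo : 0 < lo) (h : lo ≤ hi) (hp : 0 ≤ p)
    (hc : c ∈ Icc lo hi) :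
    p ^ 2 / projIcc lo hi h p + projIcc lo hi h p ≤ p ^ 2 / c + c := by
  set c' : ℝ := (projIcc lo hi h p : ℝ)
  have hc' : c' ∈ Icc lo hi := (projIcc lo hi h p).2
  have hc'0 : 0 < c' := hlo.trans_le hc'.1
  have hc0 : 0 < c := hlo.trans_le hc.1
  have hdiff : p ^ 2 / c + c - (p ^ 2 / c' + c') = (c - c') * (c * c' - p ^ 2) / (c * c') := by
    field_simp
    ring
  suffices 0 ≤ (c - c') * (c * c' - p ^ 2) by
    have := div_nonneg this (mul_pos hc0 hc'0).le
    linarith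
  rcases le_total p lo with hplo | hlop
  · have hc'lo : c' = lo := congrArg Subtype.val (projIcc_of_le_left h hplo)
    rw [hc'lo]
    exact mul_nonneg (sub_nonneg.2 hc.1) (by nlinarith [hc.1])
  rcases le_total hi p with hhip | hphi
  · have hc'hi : c' = hi := congrArg Subtype.val (projIcc_of_right_le h hhip)
    rw [hc'hi]
    exact mul_nonneg_of_nonpos_of_nonpos (sub_nonpos.2 hc.2) (by nlinarith [hc.2])
  · have hc'p : c' = p := congrArg Subtype.val (projIcc_of_mem h ⟨hlop, hphi⟩)
    rw [hc'p]
    nlinarith [mul_nonneg hp (sq_nonneg (c - p))]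

theorem v3_impermanent_loss_nonneg_general (a b P P' : ℝ)
    (ha : 0 < a) (hab : a < b) (hP' : 0 < P') :
    P' * (V3 1 a b P').1 + (V3 1 a b P').2 ≤ P' * (V3 1 a b P).1 + (V3 1 a b P).2 := by
  have hsqrt : √a ≤ √b := Real.sqrt_le_sqrt hab.le
  have hmin := sq_div_add_projIcc_le (Real.sqrt_pos.2 ha) hsqrt (Real.sqrt_nonneg P')
    (projIcc (√a) (√b) hsqrt (√P)).2
  rw [Real.sq_sqrt hP'.le] at hmin
  rw [V3_one_eq_projIcc hab.le, V3_one_eq_projIcc hab.le]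
  simp only [mul_sub, mul_one_div]
  linarith

/-- The v3 impermanent loss is nonnegative: holding value ≥ purchase value. -/
theorem v3_impermanent_loss_nonneg (a b P P' : ℝ)
    (ha : 0 < a) (hab : a < b) (hP : 0 < P) (hP' : 0 < P') :
    P' * (V3 1 a b P').1 + (V3 1 a b P').2 ≤ P' * (V3 1 a b P).1 + (V3 1 a b P).2 :=
  v3_impermanent_loss_nonneg_general a b P P' ha hab hP'
end

section
/- Let f(W) = (n/2)·log(aW) + (b/W)·Σᵢ(xᵢ − cW)², where a = 4πp(1−p), b = 1/(4p(1−p)), c = 2p − 1, with p ∈ (0,1), n ≥ 1, and Σᵢ xᵢ² > 0. Then f'(W) = −(Σxᵢ²)/(4p(1−p)W²) + n/(2W) + n(2p−1)²/(4p(1−p)), and the unique positive critical point is W* = (Σᵢxᵢ²) / ( n( p(1−p) + √( p²(1−p)² + (1/n)(Σᵢxᵢ²)(2p−1)² ) ) ), which is a local minimum of f. -/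
/-!
Expanding the square, `f W = (n/2) log (a W) + b (S / W - 2 c T + n c² W)` with `T = ∑ xᵢ`, so
`f' W = n / (4 p (1 - p) W²) · (c² W² + 2 p (1 - p) W - S / n)`. The closed form `W*` is the
positive root of this quadratic, which changes sign from negative to positive there; this gives
uniqueness of the critical point and, by the first-derivative test, the local minimum.
-/

open Finset

theorem sum_sub_mul_sq {ι : Type*} (s : Finset ι) (x : ι → ℝ) (c W : ℝ) :
    ∑ i ∈ s, (x i - c * W) ^ 2
      = ∑ i ∈ s, x i ^ 2 - 2 * c * (∑ i ∈ s, x i) * W + #s * c ^ 2 * W ^ 2 := by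
  simp only [sub_sq, sum_add_distrib, sum_sub_distrib, ← sum_mul, ← mul_sum, sum_const,
    nsmul_eq_mul]
  ring

theorem hasDerivAt_log_add_div_mul_quadratic {m a b S T c W : ℝ} (ha : a ≠ 0) (hW : W ≠ 0) :
    HasDerivAt
      (fun W => m / 2 * Real.log (a * W) + b / W * (S - 2 * c * T * W + m * c ^ 2 * W ^ 2))
      (m / (2 * W) - b * S / W ^ 2 + b * m * c ^ 2) W := by
  have hlog : HasDerivAt (fun W => Real.log (a * W)) (a / (a * W)) W :=
    ((hasDerivAt_id' W).const_mul a).log (mul_ne_zero ha hW) |>.congr_deriv (by simp)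
  have hinv : HasDerivAt (fun W => b / W) (-b / W ^ 2) W := by
    simpa only [div_eq_mul_inv, neg_mul, mul_neg] using (hasDerivAt_inv hW).const_mul b
  have hquad : HasDerivAt (fun W => S - 2 * c * T * W + m * c ^ 2 * W ^ 2)
      (-(2 * c * T) + m * c ^ 2 * (2 * W)) W := by
    simpa using (((hasDerivAt_id' W).const_mul (2 * c * T)).const_sub S).fun_add
      ((hasDerivAt_pow 2 W).const_mul (m * c ^ 2))
  refine ((hlog.const_mul (m / 2)).fun_add (hinv.fun_mul hquad)).congr_deriv ?_
  field_simp
  ring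

/-- `C / (B + √(B² + AC))` is the root `(-B + √(B² + AC)) / A` of `A W² + 2 B W - C` with the
numerator rationalized, which stays meaningful when `A = 0`. -/
theorem exists_pos_mul_sub_rationalized_root {A B C W : ℝ} (hA : 0 ≤ A) (hB : 0 < B)
    (hC : 0 ≤ C) (hW : 0 ≤ W) :
    ∃ k > 0, A * W ^ 2 + 2 * B * W - C = k * (W - C / (B + √(B ^ 2 + A * C))) := by
  set D := √(B ^ 2 + A * C)
  have hD : D ^ 2 = B ^ 2 + A * C := Real.sq_sqrt (by positivity)
  have hBD : 0 < B + D := by positivity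
  set r := C / (B + D) with hr
  have hroot : A * r ^ 2 + 2 * B * r - C = 0 := by
    rw [hr]
    field_simp
    linear_combination (-C) * hD
  refine ⟨A * (W + r) + 2 * B, by positivity, ?_⟩
  linear_combination hroot

/-- Closed-form MLE for the bandwidth: derivative of the negative log-likelihood,
    uniqueness of the positive critical point, and the fact that it is a local
    minimum. -/
theorem mle_bandwidth (n : ℕ) (hn : 1 ≤ n) (p : ℝ) (hp : p ∈ Set.Ioo (0 : ℝ) 1)
    (x : Fin n → ℝ) (hS : 0 < ∑ i, x i ^ 2) :
    let a := 4 * Real.pi * p * (1 - p)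
    let b := 1 / (4 * p * (1 - p))
    let c := 2 * p - 1
    let f : ℝ → ℝ := fun W => (n / 2 : ℝ) * Real.log (a * W) + (b / W) * ∑ i, (x i - c * W) ^ 2
    let S := ∑ i, x i ^ 2
    let Wstar := S / (n * (p * (1 - p) +
        Real.sqrt (p ^ 2 * (1 - p) ^ 2 + (1 / n) * S * (2 * p - 1) ^ 2)))
    (∀ W : ℝ, 0 < W →
        deriv f W = -S / (4 * p * (1 - p) * W ^ 2) + n / (2 * W)
          + n * (2 * p - 1) ^ 2 / (4 * p * (1 - p))) ∧
    (0 < Wstar) ∧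
    (∀ W : ℝ, 0 < W → (deriv f W = 0 ↔ W = Wstar)) ∧
    IsLocalMin f Wstar := by
  intro a b c f S Wstar
  obtain ⟨hp0, hp1⟩ := hp
  have hq : 0 < p * (1 - p) := mul_pos hp0 (sub_pos.2 hp1)
  have hn0 : (0 : ℝ) < n := by exact_mod_cast hn
  have hS : 0 < S := hS
  have hf : ∀ W, 0 < W → HasDerivAt f (-S / (4 * p * (1 - p) * W ^ 2) + n / (2 * W)
      + n * (2 * p - 1) ^ 2 / (4 * p * (1 - p))) W := by
    intro W hW
    have hf_eq : f = fun W => n / 2 * Real.log (a * W)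
        + b / W * (S - 2 * c * (∑ i, x i) * W + n * c ^ 2 * W ^ 2) := by
      simp only [f, sum_sub_mul_sq, card_univ, Fintype.card_fin, S]
    rw [hf_eq]
    refine (hasDerivAt_log_add_div_mul_quadratic (by positivity) hW.ne').congr_deriv ?_
    simp only [b, c]
    field_simp
    ring
  have hWstar : Wstar = S / n / (p * (1 - p) + √((p * (1 - p)) ^ 2 + c ^ 2 * (S / n))) := by
    simp only [Wstar, c, div_div]
    ring_nf
  have hWstar_pos : 0 < Wstar := by
    rw [hWstar]; positivity
  have hsign : ∀ W, 0 < W → ∃ k > 0, deriv f W = k * (W - Wstar) := by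
    intro W hW
    obtain ⟨k, hk, hquad⟩ := exists_pos_mul_sub_rationalized_root (sq_nonneg c) hq
      (div_pos hS hn0).le hW.le
    refine ⟨n / (4 * p * (1 - p) * W ^ 2) * k, by positivity, ?_⟩
    rw [(hf W hW).deriv, hWstar, mul_assoc _ k, ← hquad]
    field_simp
    ring
  refine ⟨fun W hW => (hf W hW).deriv, hWstar_pos, fun W hW => ?_, ?_⟩
  · obtain ⟨k, hk, hk_eq⟩ := hsign W hW
    rw [hk_eq, mul_eq_zero, sub_eq_zero]
    simp [hk.ne']
  · have hdiff : DifferentiableOn ℝ f (Set.Ioi 0) := fun W hW =>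
      (hf W hW).differentiableAt.differentiableWithinAt
    refine isLocalMin_of_deriv_Ioo hWstar_pos (lt_add_one Wstar)
      (hf _ hWstar_pos).continuousAt (hdiff.mono Set.Ioo_subset_Ioi_self)
      (hdiff.mono fun W hW => hWstar_pos.trans hW.1) (fun W hW => ?_) (fun W hW => ?_)
    · obtain ⟨k, hk, hk_eq⟩ := hsign W hW.1
      rw [hk_eq]
      exact mul_nonpos_of_nonneg_of_nonpos hk.le (by linarith [hW.2])
    · obtain ⟨k, hk, hk_eq⟩ := hsign W (hWstar_pos.trans hW.1)
      rw [hk_eq]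
      exact mul_nonneg hk.le (by linarith [hW.1])
end
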